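/- arXiv:2601.14147 — 2 statements merged into one kernel-verified Lean document; each statement's English description precedes it below -/
import Mathlib

section
/- Let M and M' be real symmetric m×m matrices with M = M' + εB + R where B is symmetric, ‖R‖_op ≤ Cε² and |ε| small. If λ := λ_min(M') has eigenspace with orthonormal basis forming the columns of V, then λ_min(M) ≥ λ + ε·λ_min(VᵀBV) − Cε² − |ε|·‖B‖_op·δ(ε) for an error term δ(ε) → 0; in particular, if λ_min(VᵀBV) > 0 then λ_min(M) > λ_min(M') for all sufficiently small ε > 0. -/
open Matrix

noncomputable def lamMin {m : ℕ} (A : Matrix (Fin m) (Fin m) ℝ) : ℝ :=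
  ⨅ v : {v : EuclideanSpace ℝ (Fin m) // ‖v‖ = 1}, (v : Fin m → ℝ) ⬝ᵥ A *ᵥ (v : Fin m → ℝ)

noncomputable def lamMax {m : ℕ} (A : Matrix (Fin m) (Fin m) ℝ) : ℝ :=
  ⨆ v : {v : EuclideanSpace ℝ (Fin m) // ‖v‖ = 1}, (v : Fin m → ℝ) ⬝ᵥ A *ᵥ (v : Fin m → ℝ)

noncomputable def opNorm {m : ℕ} (A : Matrix (Fin m) (Fin m) ℝ) : ℝ :=
  ⨆ v : {v : EuclideanSpace ℝ (Fin m) // ‖v‖ = 1},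
    ‖(show EuclideanSpace ℝ (Fin m) from WithLp.toLp 2 (A *ᵥ (v : Fin m → ℝ)))‖

/-
Write `λ = lamMin M'` and let `0 < g` be at most the gap between `λ` and the other eigenvalues
of `M'`. A unit vector `v` splits orthogonally as `p + q` with `p` in the `λ`-eigenspace, so
`p = V w` with `‖w‖ = ‖p‖`. Then `vᵀM'v ≥ λ + g‖q‖²`, `vᵀBv ≥ λ_min(VᵀBV) - 3‖B‖‖q‖` and
`vᵀRv ≥ -‖R‖`, and minimising `g t² - 3ε‖B‖t` over `t` costs only `9‖B‖²ε²/(4g)`, which is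
`ε‖B‖δ(ε)` with `δ(ε) = 9‖B‖ε/(4g) → 0`.
-/

open Filter Topology RealInnerProductSpace

lemma exists_pos_add_le_of_ne {ι : Type*} [Finite ι] {μ : ι → ℝ} {c : ℝ} (hμ : ∀ i, c ≤ μ i) :
    ∃ g > 0, ∀ i, μ i ≠ c → c + g ≤ μ i := by
  have hgap : ∀ i, ∀ᶠ g in 𝓝[>] (0 : ℝ), μ i ≠ c → c + g ≤ μ i := fun i => by
    by_cases hi : μ i = c
    · exact .of_forall fun _ h => absurd hi h
    · have hlt : (0 : ℝ) < μ i - c := sub_pos.2 (lt_of_le_of_ne (hμ i) (Ne.symm hi))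
      filter_upwards [nhdsWithin_le_nhds (eventually_lt_nhds hlt)] with g hg _
      linarith
  exact (eventually_mem_nhdsWithin.and (eventually_all.2 hgap)).exists

lemma exists_norm_eq_one_smul {E : Type*} [NormedAddCommGroup E] [NormedSpace ℝ E] {x : E}
    (hx : x ≠ 0) : ∃ u : E, ‖u‖ = 1 ∧ x = ‖x‖ • u :=
  ⟨‖x‖⁻¹ • x, norm_smul_inv_norm hx,
    by rw [smul_smul, mul_inv_cancel₀ (norm_ne_zero_iff.2 hx), one_smul]⟩

section Rayleigh

variable {n : ℕ}

lemma opNorm_nonneg (A : Matrix (Fin n) (Fin n) ℝ) : 0 ≤ opNorm A :=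
  Real.iSup_nonneg fun _ => norm_nonneg _

lemma norm_toEuclideanCLM_le_opNorm (A : Matrix (Fin n) (Fin n) ℝ) (x : EuclideanSpace ℝ (Fin n)) :
    ‖toEuclideanCLM (𝕜 := ℝ) A x‖ ≤ opNorm A * ‖x‖ := by
  rcases eq_or_ne x 0 with rfl | hx
  · simp
  obtain ⟨u, hu, hxu⟩ := exists_norm_eq_one_smul hx
  have hbdd : BddAbove (Set.range fun v : {v : EuclideanSpace ℝ (Fin n) // ‖v‖ = 1} =>
      ‖toEuclideanCLM (𝕜 := ℝ) A v‖) := by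
    refine ⟨‖toEuclideanCLM (𝕜 := ℝ) A‖, ?_⟩
    rintro _ ⟨v, rfl⟩
    simpa [v.2] using (toEuclideanCLM (𝕜 := ℝ) A).le_opNorm v
  conv_lhs => rw [hxu, map_smul, norm_smul, norm_norm, mul_comm]
  exact mul_le_mul_of_nonneg_right (le_ciSup hbdd ⟨u, hu⟩) (norm_nonneg _)

lemma abs_dotProduct_mulVec_le (A : Matrix (Fin n) (Fin n) ℝ) (x y : EuclideanSpace ℝ (Fin n)) :
    |x.ofLp ⬝ᵥ A *ᵥ y.ofLp| ≤ opNorm A * (‖x‖ * ‖y‖) := by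
  rw [← inner_toEuclideanCLM]
  calc |⟪x, toEuclideanCLM (𝕜 := ℝ) A y⟫| ≤ ‖x‖ * ‖toEuclideanCLM (𝕜 := ℝ) A y‖ :=
        abs_real_inner_le_norm _ _
    _ ≤ ‖x‖ * (opNorm A * ‖y‖) := by gcongr; exact norm_toEuclideanCLM_le_opNorm A y
    _ = opNorm A * (‖x‖ * ‖y‖) := by ring

lemma neg_opNorm_le_dotProduct_mulVec (A : Matrix (Fin n) (Fin n) ℝ) {x : EuclideanSpace ℝ (Fin n)}
    (hx : ‖x‖ = 1) : -opNorm A ≤ x.ofLp ⬝ᵥ A *ᵥ x.ofLp := by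
  simpa [hx] using neg_le_of_abs_le (abs_dotProduct_mulVec_le A x x)

lemma lamMin_le_dotProduct_mulVec (A : Matrix (Fin n) (Fin n) ℝ) {x : EuclideanSpace ℝ (Fin n)}
    (hx : ‖x‖ = 1) : lamMin A ≤ x.ofLp ⬝ᵥ A *ᵥ x.ofLp := by
  refine ciInf_le ⟨-opNorm A, ?_⟩ (⟨x, hx⟩ : {x : EuclideanSpace ℝ (Fin n) // ‖x‖ = 1})
  rintro _ ⟨v, rfl⟩
  exact neg_opNorm_le_dotProduct_mulVec A v.2

lemma lamMin_mul_norm_sq_le (A : Matrix (Fin n) (Fin n) ℝ) (x : EuclideanSpace ℝ (Fin n)) :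
    lamMin A * ‖x‖ ^ 2 ≤ x.ofLp ⬝ᵥ A *ᵥ x.ofLp := by
  rcases eq_or_ne x 0 with rfl | hx
  · simp
  obtain ⟨u, hu, hxu⟩ := exists_norm_eq_one_smul hx
  have h := mul_le_mul_of_nonneg_right (lamMin_le_dotProduct_mulVec A hu) (sq_nonneg ‖x‖)
  conv_rhs => rw [hxu]
  simp only [WithLp.ofLp_smul, mulVec_smul, dotProduct_smul, smul_dotProduct, smul_eq_mul]
  linarith

lemma le_lamMin [Nonempty (Fin n)] (A : Matrix (Fin n) (Fin n) ℝ) {b : ℝ}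
    (h : ∀ x : EuclideanSpace ℝ (Fin n), ‖x‖ = 1 → b ≤ x.ofLp ⬝ᵥ A *ᵥ x.ofLp) : b ≤ lamMin A :=
  have : Nonempty {x : EuclideanSpace ℝ (Fin n) // ‖x‖ = 1} :=
    ⟨⟨EuclideanSpace.single (Classical.arbitrary _) 1, by simp⟩⟩
  le_ciInf fun x => h x x.2

end Rayleigh

section Isometry

variable {m s : ℕ} {V : Matrix (Fin m) (Fin s) ℝ}

lemma dotProduct_mulVec_conj (V : Matrix (Fin m) (Fin s) ℝ) (A : Matrix (Fin m) (Fin m) ℝ)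
    (w : Fin s → ℝ) : (V *ᵥ w) ⬝ᵥ A *ᵥ (V *ᵥ w) = w ⬝ᵥ (Vᵀ * A * V) *ᵥ w := by
  rw [Matrix.mul_assoc, ← mulVec_mulVec, ← mulVec_mulVec, dotProduct_mulVec w, vecMul_transpose]

lemma norm_toLp_mulVec (hV : Vᵀ * V = 1) (w : EuclideanSpace ℝ (Fin s)) :
    ‖(WithLp.toLp 2 (V *ᵥ w.ofLp) : EuclideanSpace ℝ (Fin m))‖ = ‖w‖ := by
  have h := dotProduct_mulVec_conj V 1 w.ofLp
  rw [Matrix.mul_one, hV, one_mulVec, one_mulVec] at h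
  rw [← sq_eq_sq₀ (norm_nonneg _) (norm_nonneg _), EuclideanSpace.real_norm_sq_eq,
    EuclideanSpace.real_norm_sq_eq]
  simpa [dotProduct, sq] using h

lemma lamMin_conj_le_opNorm (hV : Vᵀ * V = 1) (A : Matrix (Fin m) (Fin m) ℝ) :
    lamMin (Vᵀ * A * V) ≤ opNorm A := by
  rcases isEmpty_or_nonempty {u : EuclideanSpace ℝ (Fin s) // ‖u‖ = 1} with hs | ⟨u, hu⟩
  · simpa [lamMin] using opNorm_nonneg A
  calc lamMin (Vᵀ * A * V) ≤ u.ofLp ⬝ᵥ (Vᵀ * A * V) *ᵥ u.ofLp := lamMin_le_dotProduct_mulVec _ hu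
    _ = (V *ᵥ u.ofLp) ⬝ᵥ A *ᵥ (V *ᵥ u.ofLp) := (dotProduct_mulVec_conj V A u.ofLp).symm
    _ ≤ opNorm A := by
      simpa [norm_toLp_mulVec hV, hu] using le_of_abs_le (abs_dotProduct_mulVec_le A
        (WithLp.toLp 2 (V *ᵥ u.ofLp)) (WithLp.toLp 2 (V *ᵥ u.ofLp)))

lemma nonempty_of_transpose_mul_self_eq_one [Nonempty (Fin s)] (hV : Vᵀ * V = 1) :
    Nonempty (Fin m) := by
  by_contra h
  rw [not_nonempty_iff] at h
  have := congrFun (congrFun hV (Classical.arbitrary _)) (Classical.arbitrary _)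
  simp [Matrix.mul_apply] at this

end Isometry

theorem LinearMap.IsSymmetric.exists_spectral_gap {E : Type*} [NormedAddCommGroup E]
    [InnerProductSpace ℝ E] [FiniteDimensional ℝ E] {T : E →ₗ[ℝ] E} (hT : T.IsSymmetric) {c : ℝ}
    (hc : ∀ x, c * ‖x‖ ^ 2 ≤ ⟪x, T x⟫) :
    ∃ g > 0, ∀ x, ∃ p, T p = c • p ∧ ⟪p, x - p⟫ = 0 ∧ c * ‖x‖ ^ 2 + g * ‖x - p‖ ^ 2 ≤ ⟪x, T x⟫ := by
  set b := hT.eigenvectorBasis rfl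
  set μ := hT.eigenvalues rfl
  have hTb : ∀ x i, b.repr (T x) i = μ i * b.repr x i := hT.eigenvectorBasis_apply_self_apply rfl
  have hμ : ∀ i, c ≤ μ i := fun i => by
    simpa [real_inner_self_eq_norm_sq, ← b.repr.inner_map_map (b i), hTb, PiLp.inner_apply]
      using hc (b i)
  obtain ⟨g, hg, hgap⟩ := exists_pos_add_le_of_ne hμ
  refine ⟨g, hg, fun x => ?_⟩
  -- `p` is the orthogonal projection of `x` onto the `c`-eigenspace
  set p := b.repr.symm (WithLp.toLp 2 fun i => if μ i = c then b.repr x i else 0)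
  have hp : ∀ i, b.repr p i = if μ i = c then b.repr x i else 0 := by simp [p]
  refine ⟨p, b.repr.injective ?_, ?_, ?_⟩
  · ext i
    rw [hTb, map_smul, PiLp.smul_apply, hp, smul_eq_mul]
    split_ifs with h <;> simp [h]
  · rw [← b.repr.inner_map_map, PiLp.inner_apply]
    refine Finset.sum_eq_zero fun i _ => ?_
    rw [map_sub, PiLp.sub_apply, hp]
    split_ifs <;> simp
  · rw [← b.repr.inner_map_map, ← b.repr.norm_map, ← b.repr.norm_map (x - p),
      EuclideanSpace.real_norm_sq_eq, EuclideanSpace.real_norm_sq_eq, PiLp.inner_apply,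
      Finset.mul_sum, Finset.mul_sum, ← Finset.sum_add_distrib]
    refine Finset.sum_le_sum fun i _ => ?_
    rw [map_sub, PiLp.sub_apply, hp, hTb, Real.inner_apply]
    split_ifs with h
    · rw [h]; linarith
    · nlinarith [hgap i h, sq_nonneg (b.repr x i)]

theorem Matrix.IsSymm.exists_spectral_gap {n : ℕ} {A : Matrix (Fin n) (Fin n) ℝ} (hA : A.IsSymm) :
    ∃ g > 0, ∀ x : EuclideanSpace ℝ (Fin n), ∃ p : EuclideanSpace ℝ (Fin n),
      A *ᵥ p.ofLp = lamMin A • p.ofLp ∧ ⟪p, x - p⟫ = 0 ∧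
      lamMin A * ‖x‖ ^ 2 + g * ‖x - p‖ ^ 2 ≤ x.ofLp ⬝ᵥ A *ᵥ x.ofLp := by
  have hT : (toEuclideanCLM (𝕜 := ℝ) A :
      EuclideanSpace ℝ (Fin n) →ₗ[ℝ] EuclideanSpace ℝ (Fin n)).IsSymmetric := by
    rw [coe_toEuclideanCLM_eq_toEuclideanLin]
    exact isSymmetric_toEuclideanLin_iff.2 (isHermitian_iff_isSymm.2 hA)
  obtain ⟨g, hg, h⟩ := hT.exists_spectral_gap fun x => by
    simpa [inner_toEuclideanCLM] using lamMin_mul_norm_sq_le A x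
  refine ⟨g, hg, fun x => ?_⟩
  obtain ⟨p, hp, hpx, hle⟩ := h x
  exact ⟨p, congrArg WithLp.ofLp hp, hpx, by simpa [inner_toEuclideanCLM] using hle⟩

section Perturbation

variable {m s : ℕ} {V : Matrix (Fin m) (Fin s) ℝ}

lemma sub_opNorm_mul_le_dotProduct_mulVec (hV : Vᵀ * V = 1) (B : Matrix (Fin m) (Fin m) ℝ)
    {v p : EuclideanSpace ℝ (Fin m)} (hv : ‖v‖ = 1) (hpv : ⟪p, v - p⟫ = 0) {w : Fin s → ℝ}
    (hpw : p.ofLp = V *ᵥ w) :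
    lamMin (Vᵀ * B * V) - 3 * opNorm B * ‖v - p‖ ≤ v.ofLp ⬝ᵥ B *ᵥ v.ofLp := by
  set q := v - p with hq
  have hpyth : ‖p‖ ^ 2 + ‖q‖ ^ 2 = 1 := by
    have h := norm_add_sq_real p q
    rw [hq, add_sub_cancel, hv, hpv] at h
    linarith
  have hp1 : ‖p‖ ≤ 1 := by nlinarith [norm_nonneg p, norm_nonneg q]
  have hq1 : ‖q‖ ≤ 1 := by nlinarith [norm_nonneg p, norm_nonneg q]
  have hpBp : lamMin (Vᵀ * B * V) * ‖p‖ ^ 2 ≤ p.ofLp ⬝ᵥ B *ᵥ p.ofLp := by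
    have hnorm : ‖p‖ = ‖(WithLp.toLp 2 w : EuclideanSpace ℝ (Fin s))‖ := by
      rw [← norm_toLp_mulVec hV, WithLp.ofLp_toLp, ← hpw, WithLp.toLp_ofLp]
    rw [hpw, dotProduct_mulVec_conj, hnorm]
    exact lamMin_mul_norm_sq_le _ _
  have hcross : v.ofLp ⬝ᵥ B *ᵥ v.ofLp - p.ofLp ⬝ᵥ B *ᵥ p.ofLp =
      q.ofLp ⬝ᵥ B *ᵥ v.ofLp + p.ofLp ⬝ᵥ B *ᵥ q.ofLp := by
    simp only [hq, WithLp.ofLp_sub, sub_dotProduct, mulVec_sub, dotProduct_sub]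
    ring
  have hqv := neg_le_of_abs_le (abs_dotProduct_mulVec_le B q v)
  have hpq := neg_le_of_abs_le (abs_dotProduct_mulVec_le B p q)
  have hlam := lamMin_conj_le_opNorm hV B
  have hB := opNorm_nonneg B
  rw [hv] at hqv
  nlinarith [mul_le_mul_of_nonneg_left hp1 (mul_nonneg hB (norm_nonneg q)),
    mul_le_mul_of_nonneg_left hq1 (mul_nonneg hB (norm_nonneg q)),
    mul_le_mul_of_nonneg_right hlam (sq_nonneg ‖q‖)]

theorem exists_lamMin_add_smul_add_ge [Nonempty (Fin m)] {M' : Matrix (Fin m) (Fin m) ℝ}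
    (hM' : M'.IsSymm) (hV : Vᵀ * V = 1)
    (hker : ∀ v : Fin m → ℝ, M' *ᵥ v = lamMin M' • v → ∃ w : Fin s → ℝ, v = V *ᵥ w) :
    ∃ g > 0, ∀ (B R : Matrix (Fin m) (Fin m) ℝ) (ε : ℝ), 0 ≤ ε →
      lamMin M' + ε * lamMin (Vᵀ * B * V) - opNorm R - 9 * opNorm B ^ 2 * ε ^ 2 / (4 * g)
        ≤ lamMin (M' + ε • B + R) := by
  obtain ⟨g, hg, hgap⟩ := hM'.exists_spectral_gap
  refine ⟨g, hg, fun B R ε hε => le_lamMin _ fun v hv => ?_⟩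
  obtain ⟨p, hp, hpv, hM'v⟩ := hgap v
  obtain ⟨w, hpw⟩ := hker _ hp
  have hBv := sub_opNorm_mul_le_dotProduct_mulVec hV B hv hpv hpw
  have hRv := neg_opNorm_le_dotProduct_mulVec R hv
  rw [hv, one_pow, mul_one] at hM'v
  have hsplit : v.ofLp ⬝ᵥ (M' + ε • B + R) *ᵥ v.ofLp = v.ofLp ⬝ᵥ M' *ᵥ v.ofLp +
      ε * v.ofLp ⬝ᵥ B *ᵥ v.ofLp + v.ofLp ⬝ᵥ R *ᵥ v.ofLp := by
    simp only [add_mulVec, smul_mulVec, dotProduct_add, dotProduct_smul, smul_eq_mul]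
  have hamgm : -(9 * opNorm B ^ 2 * ε ^ 2 / (4 * g)) ≤
      g * ‖v - p‖ ^ 2 - 3 * ε * opNorm B * ‖v - p‖ := by
    rw [neg_le, neg_sub, le_div_iff₀ (by positivity)]
    nlinarith [sq_nonneg (2 * g * ‖v - p‖ - 3 * ε * opNorm B)]
  linarith [mul_le_mul_of_nonneg_left hBv hε]

end Perturbation

lemma exists_pos_forall_Ioo_lt_of_le {f δ : ℝ → ℝ} {a b C K : ℝ} (hδ : Tendsto δ (𝓝[>] 0) (𝓝 0))
    (hb : 0 < b) (hf : ∀ ε : ℝ, 0 < ε → a + ε * b - C * ε ^ 2 - ε * K * δ ε ≤ f ε) :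
    ∃ ε₀ > (0 : ℝ), ∀ ε ∈ Set.Ioo (0 : ℝ) ε₀, a < f ε := by
  have hlim : Tendsto (fun ε => b - C * ε - K * δ ε) (𝓝[>] 0) (𝓝 b) := by
    have h0 : Tendsto (fun ε : ℝ => C * ε) (𝓝[>] 0) (𝓝 0) :=
      ((continuous_const_mul C).tendsto' 0 0 (mul_zero C)).mono_left nhdsWithin_le_nhds
    simpa using (tendsto_const_nhds.sub h0).sub (hδ.const_mul K)
  have hev : ∀ᶠ ε in 𝓝[>] 0, a < f ε := by
    filter_upwards [hlim.eventually (eventually_gt_nhds hb), self_mem_nhdsWithin] with ε hpos hε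
    have hε' : (0 : ℝ) < ε := hε
    linarith [hf ε hε', mul_pos hε' hpos]
  obtain ⟨ε₀, hε₀, hsub⟩ := mem_nhdsGT_iff_exists_Ioo_subset.1 hev
  exact ⟨ε₀, hε₀, hsub⟩

theorem stmt14_general {m s : ℕ} (hs : 0 < s) (M' B : Matrix (Fin m) (Fin m) ℝ)
    (R M : ℝ → Matrix (Fin m) (Fin m) ℝ) (C : ℝ)
    (hM' : M'.IsSymm)
    (hRC : ∀ ε : ℝ, opNorm (R ε) ≤ C * ε ^ 2)
    (hM : ∀ ε : ℝ, M ε = M' + ε • B + R ε)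
    (V : Matrix (Fin m) (Fin s) ℝ) (hVorth : Vᵀ * V = 1)
    (hVspan : ∀ v : Fin m → ℝ, (M' *ᵥ v = lamMin M' • v) ↔ ∃ w : Fin s → ℝ, v = V *ᵥ w) :
    (∃ δ : ℝ → ℝ, Filter.Tendsto δ (nhdsWithin 0 (Set.Ioi 0)) (nhds 0) ∧
      ∀ ε : ℝ, 0 < ε →
        lamMin M' + ε * lamMin (Vᵀ * B * V) - C * ε ^ 2 - ε * opNorm B * δ ε
          ≤ lamMin (M ε)) ∧
    (0 < lamMin (Vᵀ * B * V) →
      ∃ ε₀ > (0:ℝ), ∀ ε ∈ Set.Ioo (0:ℝ) ε₀, lamMin M' < lamMin (M ε)) := by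
  have : Nonempty (Fin s) := ⟨⟨0, hs⟩⟩
  have : Nonempty (Fin m) := nonempty_of_transpose_mul_self_eq_one hVorth
  obtain ⟨g, -, hbound⟩ := exists_lamMin_add_smul_add_ge hM' hVorth fun v => (hVspan v).1
  have hexp : ∃ δ : ℝ → ℝ, Tendsto δ (𝓝[>] 0) (𝓝 0) ∧ ∀ ε : ℝ, 0 < ε →
      lamMin M' + ε * lamMin (Vᵀ * B * V) - C * ε ^ 2 - ε * opNorm B * δ ε ≤ lamMin (M ε) := by
    refine ⟨fun ε => 9 * opNorm B * ε / (4 * g), ?_, fun ε hε => ?_⟩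
    · exact (((continuous_const_mul _).div_const _).tendsto' 0 0 (by simp)).mono_left
        nhdsWithin_le_nhds
    · rw [hM]
      have := hbound B (R ε) ε hε.le
      have := hRC ε
      have : ε * opNorm B * (9 * opNorm B * ε / (4 * g)) =
          9 * opNorm B ^ 2 * ε ^ 2 / (4 * g) := by ring
      linarith
  obtain ⟨δ, hδ, hle⟩ := hexp
  exact ⟨⟨δ, hδ, hle⟩, fun hpos => exists_pos_forall_Ioo_lt_of_le hδ hpos hle⟩

/-- a perturbation expansion of λ_min.  If M(ε) = M' + εB + R(ε) with
‖R(ε)‖_op ≤ Cε², and V is an orthonormal basis of the eigenspace of λ = λ_min(M'),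
then λ_min(M(ε)) ≥ λ + ε·λ_min(VᵀBV) − Cε² − ε·‖B‖_op·δ(ε) for some error δ(ε) → 0 as
ε → 0⁺; in particular, if λ_min(VᵀBV) > 0 then λ_min(M(ε)) > λ_min(M') for all
sufficiently small ε > 0. -/
theorem stmt14 {m s : ℕ} (hs : 0 < s) (M' B : Matrix (Fin m) (Fin m) ℝ)
    (R M : ℝ → Matrix (Fin m) (Fin m) ℝ) (C : ℝ)
    (hM' : M'.IsSymm) (hB : B.IsSymm) (hR : ∀ ε, (R ε).IsSymm)
    (hRC : ∀ ε : ℝ, opNorm (R ε) ≤ C * ε ^ 2)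
    (hM : ∀ ε : ℝ, M ε = M' + ε • B + R ε)
    (V : Matrix (Fin m) (Fin s) ℝ) (hVorth : Vᵀ * V = 1)
    (hVspan : ∀ v : Fin m → ℝ, (M' *ᵥ v = lamMin M' • v) ↔ ∃ w : Fin s → ℝ, v = V *ᵥ w) :
    (∃ δ : ℝ → ℝ, Filter.Tendsto δ (nhdsWithin 0 (Set.Ioi 0)) (nhds 0) ∧
      ∀ ε : ℝ, 0 < ε →
        lamMin M' + ε * lamMin (Vᵀ * B * V) - C * ε ^ 2 - ε * opNorm B * δ ε
          ≤ lamMin (M ε)) ∧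
    (0 < lamMin (Vᵀ * B * V) →
      ∃ ε₀ > (0:ℝ), ∀ ε ∈ Set.Ioo (0:ℝ) ε₀, lamMin M' < lamMin (M ε)) :=
  stmt14_general hs M' B R M C hM' hRC hM V hVorth hVspan
end

section
/- Let f : ℝ^d → ℝ^m be bounded and Lipschitz on a compact set Ω ⊂ ℝ^d: ‖f(x)‖ ≤ K and ‖f(x) − f(y)‖ ≤ L‖x − y‖ for x, y ∈ Ω. Then for any two probability measures ρ₁, ρ₂ supported on Ω, the information matrices satisfy ‖M_{ρ₁} − M_{ρ₂}‖_op ≤ 2KL·W₁(ρ₁, ρ₂) ≤ 2KL·W₂(ρ₁, ρ₂), where W_p denotes the p-Wasserstein distance. Consequently the E-criterion F_E(ρ) = λ_min(M_ρ) is Lipschitz with respect to W₂ with constant 2KL. -/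
/-!
For a vector `v`, `M_ρ v = ∫ ⟪f x, v⟫ f x dρ(x)`, and on `Ω` the integrand is `2KL‖v‖`-Lipschitz
because `⟪a, v⟫ a - ⟪b, v⟫ b = ⟪a - b, v⟫ a + ⟪b, v⟫ (a - b)`. Writing `M_{ρ₁} v - M_{ρ₂} v` as
one integral against a coupling `γ` of `ρ₁` and `ρ₂` bounds it by `2KL ∫ ‖x - y‖ dγ`, and taking
the infimum over `γ` gives the `W₁` estimate. For each coupling `∫ ‖x - y‖ dγ` is at most the
`L²` norm of `‖x - y‖` (Cauchy–Schwarz), so `W₁ ≤ W₂`; finally `λ_min`, an infimum of quadratic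
forms, is `1`-Lipschitz for the operator norm.
-/

open Matrix MeasureTheory

noncomputable def infoMatrix {d m : ℕ} (f : EuclideanSpace ℝ (Fin d) → EuclideanSpace ℝ (Fin m))
    (ρ : Measure (EuclideanSpace ℝ (Fin d))) : Matrix (Fin m) (Fin m) ℝ :=
  fun i j => ∫ x, (f x : Fin m → ℝ) i * (f x : Fin m → ℝ) j ∂ρ

/-- Couplings of two measures: measures on the product with the given marginals. -/
def couplings {E : Type*} [MeasurableSpace E] (μ ν : Measure E) : Set (Measure (E × E)) :=
  {γ | γ.map Prod.fst = μ ∧ γ.map Prod.snd = ν}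

/-- The p-Wasserstein distance (p = 1, 2 used below). -/
noncomputable def Wp {E : Type*} [MeasurableSpace E] [NormedAddCommGroup E]
    (p : ℝ) (μ ν : Measure E) : ℝ :=
  sInf {r : ℝ | ∃ γ ∈ couplings μ ν, r = (∫ q, ‖q.1 - q.2‖ ^ p ∂γ) ^ (1 / p)}

open scoped InnerProductSpace

section OperatorNorm

variable {m : ℕ}

lemma norm_toLp_mulVec_le_opNorm (A : Matrix (Fin m) (Fin m) ℝ) {v : EuclideanSpace ℝ (Fin m)}
    (hv : ‖v‖ = 1) : ‖(WithLp.toLp 2 (A *ᵥ v) : EuclideanSpace ℝ (Fin m))‖ ≤ opNorm A := by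
  open scoped Matrix.Norms.L2Operator in
  refine le_ciSup (f := fun w : {v : EuclideanSpace ℝ (Fin m) // ‖v‖ = 1} =>
    ‖(WithLp.toLp 2 (A *ᵥ w.1) : EuclideanSpace ℝ (Fin m))‖) ⟨‖A‖, ?_⟩ ⟨v, hv⟩
  rintro _ ⟨w, rfl⟩
  simpa [w.2] using A.l2_opNorm_mulVec w

lemma opNorm_le_of_forall {A : Matrix (Fin m) (Fin m) ℝ} {c : ℝ} (hc : 0 ≤ c)
    (h : ∀ v : EuclideanSpace ℝ (Fin m), ‖v‖ = 1 →
      ‖(WithLp.toLp 2 (A *ᵥ v) : EuclideanSpace ℝ (Fin m))‖ ≤ c) :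
    opNorm A ≤ c :=
  Real.iSup_le (fun v => h v v.2) hc

lemma opNorm_sub_comm (A B : Matrix (Fin m) (Fin m) ℝ) : opNorm (A - B) = opNorm (B - A) := by
  simp only [opNorm, ← neg_sub B A, Matrix.neg_mulVec, WithLp.toLp_neg, norm_neg]

lemma abs_dotProduct_mulVec_le_opNorm (A : Matrix (Fin m) (Fin m) ℝ)
    {v : EuclideanSpace ℝ (Fin m)} (hv : ‖v‖ = 1) : |(v : Fin m → ℝ) ⬝ᵥ A *ᵥ v| ≤ opNorm A :=
  calc |(v : Fin m → ℝ) ⬝ᵥ A *ᵥ v|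
        = |⟪v, (WithLp.toLp 2 (A *ᵥ v) : EuclideanSpace ℝ (Fin m))⟫_ℝ| := by
          rw [EuclideanSpace.inner_eq_star_dotProduct, star_trivial, dotProduct_comm]
    _ ≤ ‖v‖ * ‖(WithLp.toLp 2 (A *ᵥ v) : EuclideanSpace ℝ (Fin m))‖ := abs_real_inner_le_norm _ _
    _ ≤ opNorm A := by rw [hv, one_mul]; exact norm_toLp_mulVec_le_opNorm A hv

lemma lamMin_sub_opNorm_le (A B : Matrix (Fin m) (Fin m) ℝ) :
    lamMin A - opNorm (A - B) ≤ lamMin B := by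
  rcases isEmpty_or_nonempty {v : EuclideanSpace ℝ (Fin m) // ‖v‖ = 1} with hS | hS
  · simp only [lamMin, Real.iInf_of_isEmpty, zero_sub, neg_nonpos]
    exact Real.iSup_nonneg fun _ => norm_nonneg _
  · refine le_ciInf fun v => ?_
    have hA : lamMin A ≤ (v : Fin m → ℝ) ⬝ᵥ A *ᵥ v :=
      ciInf_le ⟨-opNorm A, by
        rintro _ ⟨w, rfl⟩
        exact neg_le_of_abs_le (abs_dotProduct_mulVec_le_opNorm A w.2)⟩ v
    have hAB := abs_dotProduct_mulVec_le_opNorm (A - B) v.2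
    rw [sub_mulVec, dotProduct_sub] at hAB
    linarith [le_abs_self ((v : Fin m → ℝ) ⬝ᵥ A *ᵥ v - (v : Fin m → ℝ) ⬝ᵥ B *ᵥ v)]

lemma abs_lamMin_sub_le_opNorm (A B : Matrix (Fin m) (Fin m) ℝ) :
    |lamMin A - lamMin B| ≤ opNorm (A - B) := by
  have := lamMin_sub_opNorm_le B A
  rw [opNorm_sub_comm] at this
  exact abs_sub_le_iff.2 ⟨by linarith [lamMin_sub_opNorm_le A B], by linarith⟩

end OperatorNorm

lemma integral_le_sqrt_integral_sq {α : Type*} [MeasurableSpace α] {μ : Measure α}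
    [IsProbabilityMeasure μ] {X : α → ℝ} (hX : MemLp X 2 μ) :
    ∫ a, X a ∂μ ≤ √(∫ a, X a ^ 2 ∂μ) := by
  have h := ProbabilityTheory.variance_nonneg X μ
  rw [ProbabilityTheory.variance_eq_sub hX] at h
  exact (le_abs_self _).trans (Real.abs_le_sqrt (by simpa using h))

section Couplings

variable {E : Type*} [MeasurableSpace E] {μ ν : Measure E} {γ : Measure (E × E)}

lemma ae_fst_of_mem_couplings (hγ : γ ∈ couplings μ ν) {P : E → Prop} (h : ∀ᵐ x ∂μ, P x) :
    ∀ᵐ q ∂γ, P q.1 :=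
  ae_of_ae_map measurable_fst.aemeasurable (hγ.1 ▸ h)

lemma ae_snd_of_mem_couplings (hγ : γ ∈ couplings μ ν) {P : E → Prop} (h : ∀ᵐ x ∂ν, P x) :
    ∀ᵐ q ∂γ, P q.2 :=
  ae_of_ae_map measurable_snd.aemeasurable (hγ.2 ▸ h)

lemma isProbabilityMeasure_of_mem_couplings [IsProbabilityMeasure μ] (hγ : γ ∈ couplings μ ν) :
    IsProbabilityMeasure γ :=
  (Measure.isProbabilityMeasure_map_iff measurable_fst.aemeasurable).1 (hγ.1 ▸ ‹_›)

lemma prod_mem_couplings [IsProbabilityMeasure μ] [IsProbabilityMeasure ν] :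
    μ.prod ν ∈ couplings μ ν :=
  ⟨by simp [Measure.map_fst_prod], by simp [Measure.map_snd_prod]⟩

variable [NormedAddCommGroup E]

lemma norm_integral_sub_integral_le_of_mem_couplings {G : Type*} [NormedAddCommGroup G]
    [NormedSpace ℝ G] (hγ : γ ∈ couplings μ ν) {g : E → G} (hgμ : Integrable g μ)
    (hgν : Integrable g ν) {C : ℝ} (hg : ∀ᵐ q ∂γ, ‖g q.1 - g q.2‖ ≤ C * ‖q.1 - q.2‖)
    (hcost : Integrable (fun q : E × E => ‖q.1 - q.2‖) γ) :
    ‖∫ x, g x ∂μ - ∫ x, g x ∂ν‖ ≤ C * ∫ q, ‖q.1 - q.2‖ ∂γ := by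
  obtain ⟨rfl, rfl⟩ := hγ
  have hg₁ : Integrable (fun q : E × E => g q.1) γ :=
    (integrable_map_measure hgμ.1 measurable_fst.aemeasurable).1 hgμ
  have hg₂ : Integrable (fun q : E × E => g q.2) γ :=
    (integrable_map_measure hgν.1 measurable_snd.aemeasurable).1 hgν
  rw [integral_map measurable_fst.aemeasurable hgμ.1,
    integral_map measurable_snd.aemeasurable hgν.1,
    ← integral_sub hg₁ hg₂, ← integral_const_mul]
  exact norm_integral_le_of_norm_le (hcost.const_mul C) hg

lemma memLp_norm_sub_of_mem_couplings [BorelSpace E] [SecondCountableTopology E]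
    [IsProbabilityMeasure μ] {Ω : Set E} (hΩ : Bornology.IsBounded Ω) (hμ : ∀ᵐ x ∂μ, x ∈ Ω)
    (hν : ∀ᵐ x ∂ν, x ∈ Ω) (hγ : γ ∈ couplings μ ν) (p : ENNReal) :
    MemLp (fun q : E × E => ‖q.1 - q.2‖) p γ := by
  have := isProbabilityMeasure_of_mem_couplings hγ
  obtain ⟨C, hC⟩ := Metric.isBounded_iff.1 hΩ
  refine .of_bound (by fun_prop) C ?_
  filter_upwards [ae_fst_of_mem_couplings hγ hμ, ae_snd_of_mem_couplings hγ hν] with q h₁ h₂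
  simpa [dist_eq_norm] using hC h₁ h₂

lemma Wp_nonneg (p : ℝ) (μ ν : Measure E) : 0 ≤ Wp p μ ν :=
  Real.sInf_nonneg (by rintro _ ⟨γ, -, rfl⟩; positivity)

lemma Wp_le_of_mem_couplings {p : ℝ} (hγ : γ ∈ couplings μ ν) :
    Wp p μ ν ≤ (∫ q, ‖q.1 - q.2‖ ^ p ∂γ) ^ (1 / p) :=
  csInf_le ⟨0, by rintro _ ⟨γ, -, rfl⟩; positivity⟩ ⟨γ, hγ, rfl⟩

lemma le_mul_Wp {p a c : ℝ} (hne : (couplings μ ν).Nonempty)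
    (h : ∀ γ ∈ couplings μ ν, a ≤ c * (∫ q, ‖q.1 - q.2‖ ^ p ∂γ) ^ (1 / p)) :
    a ≤ c * Wp p μ ν := by
  obtain ⟨γ₀, hγ₀⟩ := hne
  rcases le_or_gt c 0 with hc | hc
  · exact (h γ₀ hγ₀).trans (mul_le_mul_of_nonpos_left (Wp_le_of_mem_couplings hγ₀) hc)
  · rw [← div_le_iff₀' hc]
    refine le_csInf ⟨_, γ₀, hγ₀, rfl⟩ ?_
    rintro _ ⟨γ, hγ, rfl⟩
    exact (div_le_iff₀' hc).2 (h γ hγ)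

lemma le_mul_Wp_one {a c : ℝ} (hne : (couplings μ ν).Nonempty)
    (h : ∀ γ ∈ couplings μ ν, a ≤ c * ∫ q, ‖q.1 - q.2‖ ∂γ) : a ≤ c * Wp 1 μ ν :=
  le_mul_Wp hne fun γ hγ => by simpa using h γ hγ

lemma Wp_one_le_Wp_two [IsProbabilityMeasure μ] [IsProbabilityMeasure ν]
    (hL2 : ∀ γ ∈ couplings μ ν, MemLp (fun q : E × E => ‖q.1 - q.2‖) 2 γ) :
    Wp 1 μ ν ≤ Wp 2 μ ν := by
  refine le_csInf ⟨_, _, prod_mem_couplings, rfl⟩ ?_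
  rintro _ ⟨γ, hγ, rfl⟩
  have := isProbabilityMeasure_of_mem_couplings hγ
  calc Wp 1 μ ν ≤ ∫ q, ‖q.1 - q.2‖ ∂γ := by simpa using Wp_le_of_mem_couplings (p := 1) hγ
    _ ≤ √(∫ q, ‖q.1 - q.2‖ ^ 2 ∂γ) := integral_le_sqrt_integral_sq (hL2 γ hγ)
    _ = (∫ q, ‖q.1 - q.2‖ ^ (2 : ℝ) ∂γ) ^ (1 / (2 : ℝ)) := by
      simp only [Real.sqrt_eq_rpow, Real.rpow_two, one_div]

lemma Wp_eq_zero_of_subsingleton [IsProbabilityMeasure μ] [IsProbabilityMeasure ν] {p : ℝ}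
    (hp : 0 < p) {Ω : Set E} (hΩ : Ω.Subsingleton) (hμ : ∀ᵐ x ∂μ, x ∈ Ω)
    (hν : ∀ᵐ x ∂ν, x ∈ Ω) : Wp p μ ν = 0 := by
  refine le_antisymm ((Wp_le_of_mem_couplings prod_mem_couplings).trans_eq ?_) (Wp_nonneg p μ ν)
  have hdiag : ∀ᵐ q ∂(μ.prod ν), q.1 = q.2 := by
    filter_upwards [ae_fst_of_mem_couplings prod_mem_couplings hμ,
      ae_snd_of_mem_couplings prod_mem_couplings hν] with q h₁ h₂
    exact hΩ h₁ h₂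
  rw [integral_eq_zero_of_ae (hdiag.mono fun q hq => by simp [hq, hp.ne']),
    Real.zero_rpow (by positivity)]

end Couplings

lemma norm_inner_smul_sub_inner_smul_le {F : Type*} [NormedAddCommGroup F] [InnerProductSpace ℝ F]
    (a b v : F) : ‖⟪a, v⟫_ℝ • a - ⟪b, v⟫_ℝ • b‖ ≤ (‖a‖ + ‖b‖) * ‖a - b‖ * ‖v‖ := by
  have hsplit : ⟪a, v⟫_ℝ • a - ⟪b, v⟫_ℝ • b = ⟪a - b, v⟫_ℝ • a + ⟪b, v⟫_ℝ • (a - b) := by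
    rw [inner_sub_left]; module
  calc ‖⟪a, v⟫_ℝ • a - ⟪b, v⟫_ℝ • b‖ ≤ ‖⟪a - b, v⟫_ℝ‖ * ‖a‖ + ‖⟪b, v⟫_ℝ‖ * ‖a - b‖ := by
        rw [hsplit, ← norm_smul, ← norm_smul]; exact norm_add_le _ _
    _ ≤ ‖a - b‖ * ‖v‖ * ‖a‖ + ‖b‖ * ‖v‖ * ‖a - b‖ := by
        gcongr <;> exact norm_inner_le_norm _ _
    _ = (‖a‖ + ‖b‖) * ‖a - b‖ * ‖v‖ := by ring

lemma integrable_comp_of_ae_norm_le {α E G : Type*} [MeasurableSpace α] [NormedAddCommGroup E]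
    [ProperSpace E] [NormedAddCommGroup G] {μ : Measure α} [IsFiniteMeasure μ] {f : α → E}
    {φ : E → G} (hφ : Continuous φ) (hf : AEStronglyMeasurable f μ) {K : ℝ}
    (hK : ∀ᵐ x ∂μ, ‖f x‖ ≤ K) : Integrable (fun x => φ (f x)) μ := by
  obtain ⟨C, hC⟩ := (isCompact_closedBall (0 : E) K).exists_bound_of_continuousOn hφ.continuousOn
  exact .of_bound (hφ.comp_aestronglyMeasurable hf) C
    (hK.mono fun x hx => hC _ (mem_closedBall_zero_iff.2 hx))

section InformationMatrix

variable {d m : ℕ} {f : EuclideanSpace ℝ (Fin d) → EuclideanSpace ℝ (Fin m)}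

lemma toLp_infoMatrix_mulVec {ρ : Measure (EuclideanSpace ℝ (Fin d))} [IsFiniteMeasure ρ]
    (hf : AEStronglyMeasurable f ρ) {K : ℝ} (hK : ∀ᵐ x ∂ρ, ‖f x‖ ≤ K)
    (v : EuclideanSpace ℝ (Fin m)) :
    (WithLp.toLp 2 (infoMatrix f ρ *ᵥ v) : EuclideanSpace ℝ (Fin m)) =
      ∫ x, ⟪f x, v⟫_ℝ • f x ∂ρ := by
  ext i
  have hproj := (EuclideanSpace.proj (𝕜 := ℝ) i).integral_comp_comm
    (integrable_comp_of_ae_norm_le (φ := fun y => ⟪y, v⟫_ℝ • y) (by fun_prop) hf hK)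
  simp only [PiLp.proj_apply] at hproj
  rw [← hproj]
  have hint : ∀ j, Integrable (fun x => (f x : Fin m → ℝ) i * (f x : Fin m → ℝ) j) ρ := fun j =>
    integrable_comp_of_ae_norm_le (φ := fun y : EuclideanSpace ℝ (Fin m) => y i * y j)
      (by fun_prop) hf hK
  simp only [mulVec, dotProduct, infoMatrix, ← integral_mul_const]
  rw [← integral_finsetSum _ fun j _ => (hint j).mul_const _]
  congr 1 with x
  simp [PiLp.inner_apply, Finset.mul_sum, mul_comm, mul_left_comm]

variable {Ω : Set (EuclideanSpace ℝ (Fin d))} {K L : ℝ}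

lemma opNorm_infoMatrix_sub_le_of_mem_couplings (hf : Measurable f)
    (hK : ∀ x ∈ Ω, ‖f x‖ ≤ K) (hL : ∀ x ∈ Ω, ∀ y ∈ Ω, ‖f x - f y‖ ≤ L * ‖x - y‖)
    {ρ₁ ρ₂ : Measure (EuclideanSpace ℝ (Fin d))} [IsFiniteMeasure ρ₁] [IsFiniteMeasure ρ₂]
    (h₁ : ∀ᵐ x ∂ρ₁, x ∈ Ω) (h₂ : ∀ᵐ x ∂ρ₂, x ∈ Ω)
    {γ : Measure (EuclideanSpace ℝ (Fin d) × EuclideanSpace ℝ (Fin d))}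
    (hγ : γ ∈ couplings ρ₁ ρ₂) (hcost : Integrable (fun q => ‖q.1 - q.2‖) γ) :
    opNorm (infoMatrix f ρ₁ - infoMatrix f ρ₂) ≤ 2 * K * L * ∫ q, ‖q.1 - q.2‖ ∂γ := by
  have hΩ : ∀ᵐ q ∂γ, q.1 ∈ Ω ∧ q.2 ∈ Ω :=
    (ae_fst_of_mem_couplings hγ h₁).and (ae_snd_of_mem_couplings hγ h₂)
  have hK₁ : ∀ᵐ x ∂ρ₁, ‖f x‖ ≤ K := h₁.mono hK
  have hK₂ : ∀ᵐ x ∂ρ₂, ‖f x‖ ≤ K := h₂.mono hK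
  refine opNorm_le_of_forall ?_ fun v hv => ?_
  · rw [← integral_const_mul]
    refine integral_nonneg_of_ae (hΩ.mono fun q ⟨hx, hy⟩ => ?_)
    have hK0 : 0 ≤ 2 * K := by linarith [(norm_nonneg _).trans (hK _ hx)]
    have hL0 : 0 ≤ L * ‖q.1 - q.2‖ := (norm_nonneg _).trans (hL _ hx _ hy)
    show 0 ≤ 2 * K * L * ‖q.1 - q.2‖
    rw [mul_assoc]
    exact mul_nonneg hK0 hL0
  rw [sub_mulVec, WithLp.toLp_sub, toLp_infoMatrix_mulVec hf.aestronglyMeasurable hK₁,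
    toLp_infoMatrix_mulVec hf.aestronglyMeasurable hK₂]
  refine norm_integral_sub_integral_le_of_mem_couplings hγ
    (integrable_comp_of_ae_norm_le (φ := fun y => ⟪y, v⟫_ℝ • y) (by fun_prop)
      hf.aestronglyMeasurable hK₁)
    (integrable_comp_of_ae_norm_le (φ := fun y => ⟪y, v⟫_ℝ • y) (by fun_prop)
      hf.aestronglyMeasurable hK₂)
    (hΩ.mono fun q ⟨hx, hy⟩ => ?_) hcost
  have hsum : ‖f q.1‖ + ‖f q.2‖ ≤ 2 * K := by linarith [hK _ hx, hK _ hy]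
  calc ‖⟪f q.1, v⟫_ℝ • f q.1 - ⟪f q.2, v⟫_ℝ • f q.2‖
      ≤ (‖f q.1‖ + ‖f q.2‖) * ‖f q.1 - f q.2‖ * ‖v‖ := norm_inner_smul_sub_inner_smul_le _ _ _
    _ ≤ 2 * K * (L * ‖q.1 - q.2‖) := by
        rw [hv, mul_one]
        exact mul_le_mul hsum (hL _ hx _ hy) (norm_nonneg _)
          ((add_nonneg (norm_nonneg _) (norm_nonneg _)).trans hsum)
    _ = 2 * K * L * ‖q.1 - q.2‖ := by ring

end InformationMatrix

/-- for f bounded by K and L-Lipschitz on a compact set Ω containing the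
supports of ρ₁, ρ₂, we have ‖M_{ρ₁} − M_{ρ₂}‖_op ≤ 2KL·W₁ ≤ 2KL·W₂, and the E-criterion
λ_min(M_ρ) is 2KL-Lipschitz with respect to W₂. -/
theorem stmt15 {d m : ℕ}
    (f : EuclideanSpace ℝ (Fin d) → EuclideanSpace ℝ (Fin m)) (hf : Measurable f)
    (Ω : Set (EuclideanSpace ℝ (Fin d))) (hΩ : IsCompact Ω)
    (K L : ℝ) (hK : ∀ x ∈ Ω, ‖f x‖ ≤ K) (hL : ∀ x ∈ Ω, ∀ y ∈ Ω, ‖f x - f y‖ ≤ L * ‖x - y‖)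
    (ρ₁ ρ₂ : Measure (EuclideanSpace ℝ (Fin d)))
    [IsProbabilityMeasure ρ₁] [IsProbabilityMeasure ρ₂]
    (hs₁ : ρ₁ Ωᶜ = 0) (hs₂ : ρ₂ Ωᶜ = 0) :
    opNorm (infoMatrix f ρ₁ - infoMatrix f ρ₂) ≤ 2 * K * L * Wp 1 ρ₁ ρ₂ ∧
    Wp 1 ρ₁ ρ₂ ≤ Wp 2 ρ₁ ρ₂ ∧
    |lamMin (infoMatrix f ρ₁) - lamMin (infoMatrix f ρ₂)| ≤ 2 * K * L * Wp 2 ρ₁ ρ₂ := by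
  have h₁ : ∀ᵐ x ∂ρ₁, x ∈ Ω := ae_iff.2 hs₁
  have h₂ : ∀ᵐ x ∂ρ₂, x ∈ Ω := ae_iff.2 hs₂
  have hL2 : ∀ γ ∈ couplings ρ₁ ρ₂, MemLp (fun q => ‖q.1 - q.2‖) 2 γ := fun γ hγ =>
    memLp_norm_sub_of_mem_couplings hΩ.isBounded h₁ h₂ hγ 2
  have hop : opNorm (infoMatrix f ρ₁ - infoMatrix f ρ₂) ≤ 2 * K * L * Wp 1 ρ₁ ρ₂ :=
    le_mul_Wp_one ⟨_, prod_mem_couplings⟩ fun γ hγ =>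
      have := isProbabilityMeasure_of_mem_couplings hγ
      opNorm_infoMatrix_sub_le_of_mem_couplings hf hK hL h₁ h₂ hγ
        ((hL2 γ hγ).integrable one_le_two)
  have hW : Wp 1 ρ₁ ρ₂ ≤ Wp 2 ρ₁ ρ₂ := Wp_one_le_Wp_two hL2
  -- `L` may be negative when `Ω` is a single point; then both distances vanish.
  have hKLW : 2 * K * L * Wp 1 ρ₁ ρ₂ ≤ 2 * K * L * Wp 2 ρ₁ ρ₂ := by
    obtain hsub | ⟨x, hx, y, hy, hxy⟩ := Ω.subsingleton_or_nontrivial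
    · rw [Wp_eq_zero_of_subsingleton one_pos hsub h₁ h₂,
        Wp_eq_zero_of_subsingleton two_pos hsub h₁ h₂]
    · have hK0 : 0 ≤ K := (norm_nonneg _).trans (hK x hx)
      have hL0 : 0 ≤ L := nonneg_of_mul_nonneg_left ((norm_nonneg _).trans (hL x hx y hy))
        (norm_pos_iff.2 (sub_ne_zero.2 hxy))
      gcongr
  exact ⟨hop, hW, (abs_lamMin_sub_le_opNorm _ _).trans (hop.trans hKLW)⟩
end
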